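/- Let X and Y be independent exponentially distributed random variables with means a > 0 and b > 0, and define C_s = max(0, log₂(1+X) − log₂(1+Y)). Then the outage probability P(C_s < R) tends to b/(a+b) as R tends to 0 from above. -/

import Mathlib

/-!
Off a null set `X, Y ≥ 0`, so the secrecy capacity vanishes exactly when `X ≤ Y`. By continuity
of the measure from above, `P(C_s < R) → P(C_s ≤ 0) = P(X ≤ Y)` as `R → 0⁺`. Conditioning on `X`
with rates `r = 1/a`, `s = 1/b`, the integrand `r e^{-rx} · P(Y ≥ x) = r e^{-(r+s)x}` is
`r/(r+s)` times the exponential density of rate `r + s`, so `P(X ≤ Y) = r/(r+s) = b/(a+b)`.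
-/

open MeasureTheory ProbabilityTheory Real Filter Set
open scoped ENNReal Topology

theorem tendsto_measure_setOf_lt_nhdsGT {α : Type*} [MeasurableSpace α] {μ : Measure α}
    [IsFiniteMeasure μ] {f : α → ℝ} (hf : Measurable f) (a : ℝ) :
    Tendsto (fun r => μ {x | f x < r}) (𝓝[>] a) (𝓝 (μ {x | f x ≤ a})) := by
  have hinter : ⋂ r > a, {x | f x < r} = {x | f x ≤ a} := by
    ext x
    simpa only [mem_iInter, mem_ofPred_eq] using forall_gt_iff_le
  rw [← hinter]
  exact tendsto_measure_biInter_gt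
    (fun r _ => (measurableSet_lt hf measurable_const).nullMeasurableSet)
    (fun i j _ hij x hx => lt_of_lt_of_le hx hij) ⟨a + 1, by simp, measure_ne_top _ _⟩

namespace ProbabilityTheory

instance (r : ℝ) : SFinite (expMeasure r) :=
  inferInstanceAs (SFinite (volume.withDensity (gammaPDF 1 r)))

instance (r : ℝ) : NullSingletonClass (expMeasure r) :=
  inferInstanceAs (NullSingletonClass (volume.withDensity (gammaPDF 1 r)))

lemma measurable_exponentialPDF (r : ℝ) : Measurable (exponentialPDF r) :=
  (measurable_exponentialPDFReal r).ennreal_ofReal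

lemma expMeasure_Iio_zero (r : ℝ) : expMeasure r (Iio 0) = 0 := by
  rw [expMeasure, gammaMeasure, withDensity_apply _ measurableSet_Iio]
  exact lintegral_exponentialPDF_of_nonpos le_rfl

lemma ae_nonneg_expMeasure (r : ℝ) : ∀ᵐ x ∂expMeasure r, 0 ≤ x := by
  simp only [ae_iff, not_le]
  exact expMeasure_Iio_zero r

lemma expMeasure_Ici {r : ℝ} (hr : 0 < r) {x : ℝ} (hx : 0 ≤ x) :
    expMeasure r (Ici x) = ENNReal.ofReal (exp (-(r * x))) := by
  have := isProbabilityMeasure_expMeasure hr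
  have hexp : exp (-(r * x)) ≤ 1 := exp_le_one_iff.2 (by nlinarith)
  rw [← compl_Iio, prob_compl_eq_one_sub measurableSet_Iio, measure_congr Iio_ae_eq_Iic,
    ← ofReal_cdf, cdf_expMeasure_eq hr, if_pos hx, ← ENNReal.ofReal_one,
    ← ENNReal.ofReal_sub _ (by linarith), sub_sub_cancel]

lemma exponentialPDF_mul_expMeasure_Ici {r s : ℝ} (hr : 0 < r) (hs : 0 < s) (x : ℝ) :
    exponentialPDF r x * expMeasure s (Ici x)
      = ENNReal.ofReal (r / (r + s)) * exponentialPDF (r + s) x := by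
  rcases lt_or_ge x 0 with hx | hx
  · simp [exponentialPDF_of_neg hx]
  rw [exponentialPDF_of_nonneg hx, exponentialPDF_of_nonneg hx, expMeasure_Ici hs hx,
    ← ENNReal.ofReal_mul (by positivity), ← ENNReal.ofReal_mul (by positivity)]
  congr 1
  rw [← mul_assoc, div_mul_cancel₀ _ (by positivity), mul_assoc, ← exp_add]
  ring_nf

lemma expMeasure_prod_setOf_le {r s : ℝ} (hr : 0 < r) (hs : 0 < s) :
    (expMeasure r).prod (expMeasure s) {p | p.1 ≤ p.2} = ENNReal.ofReal (r / (r + s)) := by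
  rw [Measure.prod_apply (measurableSet_le measurable_fst measurable_snd)]
  change ∫⁻ x, expMeasure s (Ici x) ∂volume.withDensity (exponentialPDF r) = _
  rw [lintegral_withDensity_eq_lintegral_mul _ (measurable_exponentialPDF r)
    (show Antitone fun x => expMeasure s (Ici x) from
      fun x y hxy => measure_mono (Ici_subset_Ici.2 hxy)).measurable]
  simp only [Pi.mul_apply, exponentialPDF_mul_expMeasure_Ici hr hs]
  rw [lintegral_const_mul _ (measurable_exponentialPDF _),
    lintegral_exponentialPDF_eq_one (by positivity), mul_one]

theorem IndepFun.measure_setOf_le {Ω : Type*} [MeasurableSpace Ω] {μ : Measure Ω}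
    [IsFiniteMeasure μ] {X Y : Ω → ℝ} (hX : Measurable X) (hY : Measurable Y)
    (h : IndepFun X Y μ) :
    μ {ω | X ω ≤ Y ω} = (μ.map X).prod (μ.map Y) {p | p.1 ≤ p.2} := by
  rw [← (indepFun_iff_map_prod_eq_prod_map_map hX.aemeasurable hY.aemeasurable).1 h,
    Measure.map_apply (hX.prodMk hY) (measurableSet_le measurable_fst measurable_snd)]
  rfl

end ProbabilityTheory

noncomputable def secrecyCapacity (x y : ℝ) : ℝ := max 0 (logb 2 (1 + x) - logb 2 (1 + y))

lemma Measurable.secrecyCapacity {α : Type*} [MeasurableSpace α] {f g : α → ℝ}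
    (hf : Measurable f) (hg : Measurable g) : Measurable fun x => secrecyCapacity (f x) (g x) := by
  simp only [_root_.secrecyCapacity, logb]
  fun_prop

lemma secrecyCapacity_nonpos_iff {x y : ℝ} (hx : -1 < x) (hy : -1 < y) :
    secrecyCapacity x y ≤ 0 ↔ x ≤ y := by
  rw [secrecyCapacity, max_le_iff, sub_nonpos, logb_le_logb one_lt_two (by linarith) (by linarith)]
  simp only [le_refl, true_and, add_le_add_iff_left]

/-- Asymptotics of the outage probability as the target rate tends to `0⁺`: for
independent exponential random variables `X` (mean `a`) and `Y` (mean `b`) and secrecy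
capacity `C_s = max 0 (log₂(1+X) - log₂(1+Y))`,
`P(C_s < R) → b/(a+b)` as `R → 0⁺`. -/
theorem outage_probability_tendsto_zero_rate
    {Ω : Type*} [MeasureSpace Ω] [IsProbabilityMeasure (ℙ : Measure Ω)]
    (X Y : Ω → ℝ) (a b : ℝ) (ha : 0 < a) (hb : 0 < b)
    (hXm : Measurable X) (hYm : Measurable Y)
    (hindep : IndepFun X Y ℙ)
    (hX : Measure.map X ℙ = expMeasure (1 / a))
    (hY : Measure.map Y ℙ = expMeasure (1 / b)) :
    Tendsto (fun R : ℝ => ℙ {ω | max 0 (logb 2 (1 + X ω) - logb 2 (1 + Y ω)) < R})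
      (nhdsWithin 0 (Set.Ioi 0)) (nhds (ENNReal.ofReal (b / (a + b)))) := by
  have hXnn : ∀ᵐ ω, 0 ≤ X ω := ae_of_ae_map hXm.aemeasurable (hX ▸ ae_nonneg_expMeasure _)
  have hYnn : ∀ᵐ ω, 0 ≤ Y ω := ae_of_ae_map hYm.aemeasurable (hY ▸ ae_nonneg_expMeasure _)
  have houtage_zero : ℙ {ω | secrecyCapacity (X ω) (Y ω) ≤ 0} = ENNReal.ofReal (b / (a + b)) := by
    have hae : {ω | secrecyCapacity (X ω) (Y ω) ≤ 0} =ᵐ[ℙ] {ω | X ω ≤ Y ω} := by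
      filter_upwards [hXnn, hYnn] with ω hx hy
      exact propext (secrecyCapacity_nonpos_iff (by linarith) (by linarith))
    rw [measure_congr hae, hindep.measure_setOf_le hXm hYm, hX, hY,
      expMeasure_prod_setOf_le (by positivity) (by positivity)]
    congr 1
    field_simp
    ring
  rw [← houtage_zero]
  exact tendsto_measure_setOf_lt_nhdsGT (hXm.secrecyCapacity hYm) 0
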